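/- Fix integers m = k > 2 and let Ω₀⁰ be as above. Then the stabilizer of Ω₀⁰ in O(4) is isomorphic to the dihedral group of order 8, and contains the group {id, R_{Σ₀}, R_{Σ⁰}, R_{C₀⁰}} (as in the previous statement) as a subgroup of index 2. -/

import Mathlib

open Real

noncomputable section

abbrev E4 := EuclideanSpace ℝ (Fin 4)

def pt (a b c d : ℝ) : E4 := WithLp.toLp 2 ![a, b, c, d]

def tLow (m : ℕ) (i : ℝ) : E4 := pt (cos (i * π / m)) (sin (i * π / m)) 0 0

def tUp (k : ℕ) (j : ℝ) : E4 := pt 0 0 (cos (j * π / k)) (sin (j * π / k))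

def vert (m k : ℕ) : Fin 4 → E4 :=
  ![tLow m (-(1/2)), tLow m (1/2), tUp k (-(1/2)), tUp k (1/2)]

/-- The spherical tetrahedron `Ω₀⁰`. -/
def Tet (m k : ℕ) : Set E4 :=
  {u | ‖u‖ = 1 ∧ ∃ c : Fin 4 → ℝ, (∀ i, 0 ≤ c i) ∧
    ∃ r : ℝ, 0 < r ∧ r • u = ∑ i, c i • vert m k i}

def rSigLow (x : E4) : E4 := pt (x 0) (-(x 1)) (x 2) (x 3)

def rSigUp (x : E4) : E4 := pt (x 0) (x 1) (x 2) (-(x 3))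

def rC (x : E4) : E4 := pt (x 0) (-(x 1)) (x 2) (-(x 3))

/-!
The vertices of `Ω₀⁰` form a basis of `ℝ⁴`, and `Ω₀⁰` is the set of unit vectors of the cone they
span. An isometry preserving `Ω₀⁰` therefore preserves that cone, so it permutes its extreme rays
and, being an isometry, the unit vertices themselves; it is determined by this permutation, which
must preserve the Gram matrix. For `m > 2` the only non-orthogonal pairs of distinct vertices are
`{t_{-1/2}, t_{1/2}}` and `{t^{-1/2}, t^{1/2}}`, which leaves at most 8 permutations. Conversely,
the rotation `r : (x₁, x₂, x₃, x₄) ↦ (x₃, x₄, x₁, -x₂)` of order 4 and the reflection `s = R_{Σ₀}`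
preserve `Ω₀⁰` and satisfy `s² = (s r)² = 1`, so they give an injective homomorphism from the
dihedral group of order 8, onto by counting. In it `R_{Σ⁰} = s r²` and `R_{C₀⁰} = r²`.
-/

open Set

namespace DihedralGroup

variable {G : Type*} [Group G] {n : ℕ}

lemma zpow_cast_intCast {a : G} (ha : a ^ n = 1) (k : ℤ) :
    a ^ (((k : ZMod n)).cast : ℤ) = a ^ k := by
  rw [ZMod.coe_intCast, ← zpow_eq_zpow_emod' k ha]

lemma zpow_mul_eq_mul_zpow_neg {a b : G} (hb : b ^ 2 = 1) (hab : (b * a) ^ 2 = 1) (k : ℤ) :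
    a ^ k * b = b * a ^ (-k) := by
  have hbb : b * b = 1 := by rw [← pow_two, hb]
  have hb' : b⁻¹ = b := inv_eq_of_mul_eq_one_left hbb
  have hconj : b * a * b⁻¹ = a⁻¹ := by
    rw [hb']
    exact eq_inv_of_mul_eq_one_left (by rw [← hab, pow_two, ← mul_assoc])
  calc a ^ k * b = b * (b * a ^ k * b⁻¹) := by
        rw [hb', ← mul_assoc, ← mul_assoc, hbb, one_mul]
    _ = b * a ^ (-k) := by rw [← conj_zpow, hconj, inv_zpow, zpow_neg]

def lift (a b : G) (ha : a ^ n = 1) (hb : b ^ 2 = 1) (hab : (b * a) ^ 2 = 1) :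
    DihedralGroup n →* G where
  toFun
    | r i => a ^ (i.cast : ℤ)
    | sr i => b * a ^ (i.cast : ℤ)
  map_one' := by
    show a ^ ((0 : ZMod n).cast : ℤ) = 1
    rw [ZMod.cast_zero, zpow_zero]
  map_mul' x y := by
    have hcomm := zpow_mul_eq_mul_zpow_neg hb hab
    have hbb : b * b = 1 := by rw [← pow_two, hb]
    rcases x with i | i <;> rcases y with j | j <;>
      obtain ⟨k, rfl⟩ := ZMod.intCast_surjective i <;>
      obtain ⟨l, rfl⟩ := ZMod.intCast_surjective j <;>
      simp only [r_mul_r, r_mul_sr, sr_mul_r, sr_mul_sr, ← Int.cast_add, ← Int.cast_sub,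
        zpow_cast_intCast ha, zpow_add, mul_assoc]
    · rw [← mul_assoc, hcomm, mul_assoc, ← zpow_add, neg_add_eq_sub]
    · rw [← mul_assoc (a ^ k) b, hcomm, ← mul_assoc b, ← mul_assoc b, hbb, one_mul, ← zpow_add,
        neg_add_eq_sub]

variable {a b : G} (ha : a ^ n = 1) (hb : b ^ 2 = 1) (hab : (b * a) ^ 2 = 1)

@[simp] lemma lift_r (i : ZMod n) : lift a b ha hb hab (r i) = a ^ (i.cast : ℤ) := rfl

@[simp] lemma lift_sr (i : ZMod n) : lift a b ha hb hab (sr i) = b * a ^ (i.cast : ℤ) := rfl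

lemma lift_mem {H : Subgroup G} (haH : a ∈ H) (hbH : b ∈ H) (d : DihedralGroup n) :
    lift a b ha hb hab d ∈ H := by
  rcases d with i | i
  · exact H.zpow_mem haH _
  · exact H.mul_mem hbH (H.zpow_mem haH _)

lemma lift_injective (hn : 2 < n) (hord : orderOf a = n) :
    Function.Injective (lift a b ha hb hab) := by
  rw [injective_iff_map_eq_one]
  rintro (i | i) hi <;> obtain ⟨k, rfl⟩ := ZMod.intCast_surjective i <;>
    simp only [lift_r, lift_sr, zpow_cast_intCast ha] at hi
  · rw [← orderOf_dvd_iff_zpow_eq_one, hord] at hi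
    rw [(ZMod.intCast_zmod_eq_zero_iff_dvd k n).mpr hi, r_zero]
  · -- `b` would be a power of `a`, hence commute with it, forcing `a = a⁻¹`.
    have hb' : b = a ^ (-k) := by rw [zpow_neg]; exact eq_inv_of_mul_eq_one_left hi
    have hcomm : a * b = b * a := by rw [hb']; exact (Commute.refl a).zpow_right (-k)
    have hinv : a * b = b * a⁻¹ := by simpa using zpow_mul_eq_mul_zpow_neg hb hab 1
    have hsq : a ^ 2 = 1 := by
      rw [pow_two, mul_eq_one_iff_eq_inv]
      exact mul_left_cancel (hcomm.symm.trans hinv)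
    have := Nat.le_of_dvd two_pos (hord ▸ orderOf_dvd_of_pow_eq_one hsq)
    omega

end DihedralGroup

namespace LinearIsometryEquiv

variable (R : Type*) {E : Type*} [Semiring R] [SeminormedAddCommGroup E] [Module R E]

def stabilizer (s : Set E) : Subgroup (E ≃ₗᵢ[R] E) where
  carrier := {g | g '' s = s}
  mul_mem' {g h} (hg : g '' s = s) (hh : h '' s = s) :=
    show ⇑(g * h) '' s = s by rw [coe_mul, image_comp, hh, hg]
  one_mem' := show ⇑(1 : E ≃ₗᵢ[R] E) '' s = s by rw [coe_one, image_id]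
  inv_mem' {g} (hg : g '' s = s) := show ⇑g⁻¹ '' s = s by
    conv_lhs => rw [← hg]
    exact g.toEquiv.symm_image_image s

variable {R}

lemma mem_stabilizer {s : Set E} {g : E ≃ₗᵢ[R] E} : g ∈ stabilizer R s ↔ g '' s = s := Iff.rfl

end LinearIsometryEquiv

namespace Module.Basis

section
variable {ι V : Type*} [AddCommGroup V] [Module ℝ V] (b : Basis ι ℝ V)

def orthant : Set V := {x | ∀ i, 0 ≤ b.repr x i}

variable {b}

lemma apply_mem_orthant (i : ι) : b i ∈ b.orthant := fun j => by
  classical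
  rw [repr_self, Finsupp.single_apply]
  split_ifs <;> norm_num

lemma zero_mem_orthant : (0 : V) ∈ b.orthant := fun i => by simp

lemma smul_mem_orthant {t : ℝ} (ht : 0 ≤ t) {x : V} (hx : x ∈ b.orthant) : t • x ∈ b.orthant :=
  fun i => by simpa using mul_nonneg ht (hx i)

lemma sum_smul_mem_orthant_iff [Fintype ι] {c : ι → ℝ} :
    ∑ i, c i • b i ∈ b.orthant ↔ ∀ i, 0 ≤ c i := by
  simp only [orthant, mem_ofPred_eq, repr_sum_self]

lemma mapsTo_orthant_of_perm [Fintype ι] (f : V →ₗ[ℝ] V) (σ : Equiv.Perm ι)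
    (hf : ∀ i, f (b i) = b (σ i)) : MapsTo f b.orthant b.orthant := by
  intro x hx
  have hfx : f x = ∑ j, b.repr x (σ.symm j) • b j := by
    conv_lhs => rw [← b.sum_repr x]
    simp only [map_sum, map_smul, hf]
    rw [← Equiv.sum_comp σ fun j => b.repr x (σ.symm j) • b j]
    simp only [Equiv.symm_apply_apply]
  rw [hfx, sum_smul_mem_orthant_iff]
  exact fun j => hx _

lemma eq_smul_of_add_eq {x y : V} (hx : x ∈ b.orthant) (hy : y ∈ b.orthant) {i : ι}
    (h : x + y = b i) : x = b.repr x i • b i := by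
  classical
  refine b.ext_elem fun k => ?_
  have hk := congrArg (fun v => b.repr v k) h
  simp only [map_add, Finsupp.add_apply, repr_self, map_smul, Finsupp.smul_apply,
    Finsupp.single_apply, smul_eq_mul] at hk ⊢
  split_ifs at hk ⊢ with hik
  · subst hik; ring
  · linarith [hx k, hy k]

lemma exists_eq_smul_of_mapsTo_orthant (f : V ≃ₗ[ℝ] V) (hf : MapsTo f b.orthant b.orthant)
    (hf' : MapsTo f.symm b.orthant b.orthant) (i : ι) :
    ∃ j, ∃ t : ℝ, 0 < t ∧ f (b i) = t • b j := by
  classical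
  -- Split `x = f (b i)` as `y + (x - y)` inside the orthant, with `y` on the ray of some `b j`;
  -- pulling back by `f`, `f⁻¹ y` lies on the ray of `b i`, so `x` is proportional to `y`.
  set x := f (b i)
  have hx : x ∈ b.orthant := hf (apply_mem_orthant i)
  obtain ⟨j, hj⟩ : ∃ j, b.repr x j ≠ 0 := by
    by_contra! h
    exact b.ne_zero i (f.map_eq_zero_iff.mp (b.repr.map_eq_zero_iff.mp (Finsupp.ext h)))
  have hxj : 0 < b.repr x j := (hx j).lt_of_ne' hj
  set y := b.repr x j • b j
  have hy : y ∈ b.orthant := smul_mem_orthant hxj.le (apply_mem_orthant j)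
  have hz : x - y ∈ b.orthant := fun k => by
    simp only [y, map_sub, map_smul, repr_self, Finsupp.sub_apply, Finsupp.smul_apply,
      Finsupp.single_apply, smul_eq_mul]
    split_ifs with hjk
    · subst hjk; simp
    · simpa using hx k
  set s := b.repr (f.symm y) i
  have hys : f.symm y = s • b i :=
    eq_smul_of_add_eq (hf' hy) (hf' hz) (by rw [← map_add, add_sub_cancel, f.symm_apply_apply])
  have hyx : y = s • x := by rw [← f.apply_symm_apply y, hys, map_smul]
  have hs : s ≠ 0 := by
    rintro hs
    rw [hs, zero_smul] at hyx
    exact hj ((smul_eq_zero.mp hyx).resolve_right (b.ne_zero j))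
  have hs' : 0 < s := (hf' hy i).lt_of_ne' hs
  refine ⟨j, s⁻¹ * b.repr x j, mul_pos (inv_pos.mpr hs') hxj, ?_⟩
  rw [mul_smul]
  change x = s⁻¹ • y
  rw [hyx, inv_smul_smul₀ hs]

end

section
variable {ι V : Type*} [NormedAddCommGroup V] [NormedSpace ℝ V] {b : Basis ι ℝ V}

lemma mapsTo_orthant_of_mapsTo_sphere_inter (g : V →ₗ[ℝ] V)
    (hg : MapsTo g (Metric.sphere 0 1 ∩ b.orthant) b.orthant) : MapsTo g b.orthant b.orthant := by
  intro x hx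
  rcases eq_or_ne x 0 with rfl | hx0
  · simpa using zero_mem_orthant
  have hnx : 0 < ‖x‖ := norm_pos_iff.mpr hx0
  have hu : ‖x‖⁻¹ • x ∈ Metric.sphere 0 1 ∩ b.orthant :=
    ⟨mem_sphere_zero_iff_norm.mpr (norm_smul_inv_norm hx0),
      smul_mem_orthant (inv_nonneg.mpr hnx.le) hx⟩
  simpa [smul_smul, hnx.ne'] using smul_mem_orthant hnx.le (hg hu)

lemma mapsTo_orthant_of_mem_stabilizer {g : V ≃ₗᵢ[ℝ] V}
    (hg : g ∈ LinearIsometryEquiv.stabilizer ℝ (Metric.sphere 0 1 ∩ b.orthant)) :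
    MapsTo g b.orthant b.orthant :=
  mapsTo_orthant_of_mapsTo_sphere_inter g.toLinearEquiv.toLinearMap fun _ hx =>
    (hg.symm ▸ mem_image_of_mem g hx : _ ∈ Metric.sphere 0 1 ∩ b.orthant).2

lemma exists_apply_eq_of_mem_stabilizer (hb : ∀ i, ‖b i‖ = 1) {g : V ≃ₗᵢ[ℝ] V}
    (hg : g ∈ LinearIsometryEquiv.stabilizer ℝ (Metric.sphere 0 1 ∩ b.orthant)) (i : ι) :
    ∃ j, g (b i) = b j := by
  obtain ⟨j, t, ht, hgi⟩ := exists_eq_smul_of_mapsTo_orthant g.toLinearEquiv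
    (mapsTo_orthant_of_mem_stabilizer hg) (mapsTo_orthant_of_mem_stabilizer (inv_mem hg)) i
  replace hgi : g (b i) = t • b j := hgi
  have ht1 : t = 1 := by
    have h := congrArg (‖·‖) hgi
    rwa [g.norm_map, _root_.norm_smul, hb, hb, Real.norm_eq_abs, abs_of_pos ht, mul_one,
      eq_comm] at h
  exact ⟨j, by rw [hgi, ht1, one_smul]⟩

lemma mem_stabilizer_of_perm [Fintype ι] {g : V ≃ₗᵢ[ℝ] V} (σ : Equiv.Perm ι)
    (hg : ∀ i, g (b i) = b (σ i)) :
    g ∈ LinearIsometryEquiv.stabilizer ℝ (Metric.sphere 0 1 ∩ b.orthant) := by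
  have hg' : ∀ i, g⁻¹ (b i) = b (σ.symm i) := fun i => by
    rw [LinearIsometryEquiv.coe_inv, LinearIsometryEquiv.symm_apply_eq, hg, σ.apply_symm_apply]
  have hmaps : ∀ h : V ≃ₗᵢ[ℝ] V, MapsTo h b.orthant b.orthant →
      MapsTo h (Metric.sphere 0 1 ∩ b.orthant) (Metric.sphere 0 1 ∩ b.orthant) :=
    fun h hh x hx => ⟨by simpa using hx.1, hh hx.2⟩
  refine Subset.antisymm (hmaps g ?_).image_subset
    fun y hy => ⟨g⁻¹ y, hmaps g⁻¹ ?_ hy, g.apply_symm_apply y⟩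
  · exact mapsTo_orthant_of_perm g.toLinearEquiv.toLinearMap σ hg
  · exact mapsTo_orthant_of_perm g⁻¹.toLinearEquiv.toLinearMap σ.symm hg'

end

end Module.Basis

def EuclideanSpace.negAt {ι : Type*} [Fintype ι] [DecidableEq ι] (S : Finset ι) :
    EuclideanSpace ℝ ι ≃ₗᵢ[ℝ] EuclideanSpace ℝ ι :=
  LinearIsometryEquiv.piLpCongrRight 2 fun i =>
    if i ∈ S then LinearIsometryEquiv.neg ℝ else LinearIsometryEquiv.refl ℝ ℝ

lemma cos_pi_div_pos {n : ℕ} (hn : 2 < n) : 0 < cos (π / n) := by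
  have hn' : (2 : ℝ) < n := by exact_mod_cast hn
  refine cos_pos_of_mem_Ioo ⟨by linarith [div_pos pi_pos (by linarith : (0 : ℝ) < n), pi_pos], ?_⟩
  rw [div_lt_div_iff_of_pos_left pi_pos (by linarith) two_pos]
  exact hn'

lemma cos_pi_div_two_mul_pos {n : ℕ} (hn : 1 < n) : 0 < cos (π / (2 * n)) := by
  simpa using cos_pi_div_pos (n := 2 * n) (by omega)

lemma sin_pi_div_two_mul_pos {n : ℕ} (hn : 0 < n) : 0 < sin (π / (2 * n)) := by
  have hn' : (1 : ℝ) ≤ n := by exact_mod_cast hn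
  refine sin_pos_of_pos_of_lt_pi (by positivity) ?_
  rw [div_lt_iff₀ (by positivity)]
  nlinarith [pi_pos]

lemma cos_sq_sub_sin_sq_pi_div_two_mul_pos {n : ℕ} (hn : 2 < n) :
    0 < cos (π / (2 * n)) ^ 2 - sin (π / (2 * n)) ^ 2 := by
  have h : 2 * (π / (2 * n)) = π / n := by field_simp
  rw [← cos_two_mul', h]
  exact cos_pi_div_pos hn

namespace SphericalTetrahedron

section Vertices

variable {m k : ℕ}

lemma vert_eq (m k : ℕ) : vert m k =
    ![pt (cos (π / (2 * m))) (-sin (π / (2 * m))) 0 0,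
      pt (cos (π / (2 * m))) (sin (π / (2 * m))) 0 0,
      pt 0 0 (cos (π / (2 * k))) (-sin (π / (2 * k))),
      pt 0 0 (cos (π / (2 * k))) (sin (π / (2 * k)))] := by
  have h : ∀ n : ℕ, (2⁻¹ : ℝ) * π / n = π / (2 * n) := fun n => by ring
  ext i : 1
  fin_cases i <;> simp [vert, tLow, tUp, neg_mul, neg_div, h]

lemma linearIndependent_vert (hm : 1 < m) (hk : 1 < k) : LinearIndependent ℝ (vert m k) := by
  rw [Fintype.linearIndependent_iff]
  intro a ha
  have hcoord : ∀ l : Fin 4, (∑ i, a i • vert m k i) l = 0 := by simp [ha]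
  have h0 := hcoord 0; have h1 := hcoord 1; have h2 := hcoord 2; have h3 := hcoord 3
  simp only [Fin.sum_univ_four, vert_eq, pt, PiLp.add_apply, PiLp.smul_apply, smul_eq_mul,
    Matrix.cons_val, Matrix.cons_val_zero, Matrix.cons_val_one] at h0 h1 h2 h3
  have hcm := cos_pi_div_two_mul_pos hm
  have hsm := sin_pi_div_two_mul_pos (zero_lt_one.trans hm)
  have hck := cos_pi_div_two_mul_pos hk
  have hsk := sin_pi_div_two_mul_pos (zero_lt_one.trans hk)
  have e0 := (mul_eq_zero.mp (by linarith : (a 0 + a 1) * cos (π / (2 * m)) = 0)).resolve_right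
    hcm.ne'
  have e1 := (mul_eq_zero.mp (by linarith : (a 1 - a 0) * sin (π / (2 * m)) = 0)).resolve_right
    hsm.ne'
  have e2 := (mul_eq_zero.mp (by linarith : (a 2 + a 3) * cos (π / (2 * k)) = 0)).resolve_right
    hck.ne'
  have e3 := (mul_eq_zero.mp (by linarith : (a 3 - a 2) * sin (π / (2 * k)) = 0)).resolve_right
    hsk.ne'
  intro i
  fin_cases i <;> simp <;> linarith

def vertBasis (hm : 1 < m) (hk : 1 < k) : Module.Basis (Fin 4) ℝ E4 :=
  basisOfLinearIndependentOfCardEqFinrank (linearIndependent_vert hm hk) (by simp)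

@[simp] lemma coe_vertBasis (hm : 1 < m) (hk : 1 < k) : ⇑(vertBasis hm hk) = vert m k :=
  coe_basisOfLinearIndependentOfCardEqFinrank _ _

lemma norm_vert (i : Fin 4) : ‖vert m k i‖ = 1 := by
  rw [EuclideanSpace.norm_eq, sqrt_eq_one]
  fin_cases i <;> simp [vert_eq, pt, Fin.sum_univ_four]

lemma tet_eq (hm : 1 < m) (hk : 1 < k) :
    Tet m k = Metric.sphere 0 1 ∩ (vertBasis hm hk).orthant := by
  ext u
  simp only [Tet, mem_ofPred_eq, mem_inter_iff, mem_sphere_zero_iff_norm]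
  refine and_congr_right fun _ => ⟨?_, fun hu => ⟨_, hu, 1, one_pos, ?_⟩⟩
  · rintro ⟨c, hc, r, hr, hru⟩
    have hru' : r • u ∈ (vertBasis hm hk).orthant := by
      rw [hru, ← coe_vertBasis hm hk]
      exact Module.Basis.sum_smul_mem_orthant_iff.mpr hc
    simpa [smul_smul, hr.ne'] using Module.Basis.smul_mem_orthant (inv_nonneg.mpr hr.le) hru'
  · rw [one_smul, ← coe_vertBasis hm hk]
    exact ((vertBasis hm hk).sum_repr u).symm

lemma inner_vert_ne_zero_iff (hm : 2 < m) (hk : 2 < k) (i j : Fin 4) :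
    inner ℝ (vert m k i) (vert m k j) ≠ 0 ↔ (i : ℕ) / 2 = (j : ℕ) / 2 := by
  have hm' := cos_sq_sub_sin_sq_pi_div_two_mul_pos hm
  have hk' := cos_sq_sub_sin_sq_pi_div_two_mul_pos hk
  have hm1 := cos_sq_add_sin_sq (π / (2 * m))
  have hk1 := cos_sq_add_sin_sq (π / (2 * k))
  fin_cases i <;> fin_cases j <;> simp [vert_eq, pt, PiLp.inner_apply, Fin.sum_univ_four]
  all_goals intros; nlinarith

end Vertices

section Stabilizer

variable {m k : ℕ}

/-- `(i : ℕ) / 2` indexes the great circle (`x₃ = x₄ = 0` or `x₁ = x₂ = 0`) carrying vertex `i`. -/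
def PreservesBlocks (f : Fin 4 → Fin 4) : Prop :=
  Function.Injective f ∧ ∀ i j : Fin 4, (f i : ℕ) / 2 = (f j : ℕ) / 2 ↔ (i : ℕ) / 2 = (j : ℕ) / 2

instance : DecidablePred PreservesBlocks := fun _ => inferInstanceAs (Decidable (_ ∧ _))

lemma card_preservesBlocks : Nat.card {f // PreservesBlocks f} = 8 := by
  rw [Nat.card_eq_fintype_card]
  decide

lemma exists_preservesBlocks (hm : 2 < m) (hk : 2 < k) {g : E4 ≃ₗᵢ[ℝ] E4}
    (hg : g '' Tet m k = Tet m k) :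
    ∃ f, PreservesBlocks f ∧ ∀ i, g (vert m k i) = vert m k (f i) := by
  have hm1 : 1 < m := one_lt_two.trans hm
  have hk1 : 1 < k := one_lt_two.trans hk
  rw [tet_eq hm1 hk1] at hg
  choose f hf using Module.Basis.exists_apply_eq_of_mem_stabilizer
    (by simpa using norm_vert) (LinearIsometryEquiv.mem_stabilizer.mpr hg)
  simp only [coe_vertBasis] at hf
  refine ⟨f, ⟨fun i j hij => ?_, fun i j => ?_⟩, hf⟩
  · exact (linearIndependent_vert hm1 hk1).injective (g.injective (by rw [hf, hf, hij]))
  · rw [← inner_vert_ne_zero_iff hm hk, ← inner_vert_ne_zero_iff hm hk, ← hf, ← hf,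
      g.inner_map_map]

lemma exists_injective_preservesBlocks (hm : 2 < m) (hk : 2 < k) :
    ∃ F : {g : E4 ≃ₗᵢ[ℝ] E4 // g '' Tet m k = Tet m k} → {f // PreservesBlocks f},
      Function.Injective F := by
  choose F hF hgF using fun g : {g : E4 ≃ₗᵢ[ℝ] E4 // g '' Tet m k = Tet m k} =>
    exists_preservesBlocks hm hk g.2
  refine ⟨fun g => ⟨F g, hF g⟩, fun g h hgh => Subtype.ext ?_⟩
  have hFgh : F g = F h := congrArg Subtype.val hgh
  refine LinearIsometryEquiv.toLinearEquiv_injective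
    ((vertBasis (one_lt_two.trans hm) (one_lt_two.trans hk)).ext' fun i => ?_)
  simp only [coe_vertBasis, LinearIsometryEquiv.coe_toLinearEquiv, hgF, hFgh]

end Stabilizer

section Generators

def rot : E4 ≃ₗᵢ[ℝ] E4 :=
  (LinearIsometryEquiv.piLpCongrLeft 2 ℝ ℝ (Equiv.swap 0 2 * Equiv.swap 1 3)).trans
    (EuclideanSpace.negAt {3})

def refl : E4 ≃ₗᵢ[ℝ] E4 := EuclideanSpace.negAt {1}

lemma rot_apply (x : E4) : rot x = pt (x 2) (x 3) (x 0) (-(x 1)) := by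
  ext i
  fin_cases i <;> simp [rot, EuclideanSpace.negAt, pt] <;> rfl

lemma refl_apply (x : E4) : refl x = pt (x 0) (-(x 1)) (x 2) (x 3) := by
  ext i
  fin_cases i <;> simp [refl, EuclideanSpace.negAt, pt]

lemma coe_refl : ⇑refl = rSigLow := funext refl_apply

lemma coe_rot_sq : ⇑(rot ^ 2) = rC := by
  funext x
  simp [pow_two, rot_apply, rC, pt]

lemma coe_refl_mul_rot_sq : ⇑(refl * rot ^ 2) = rSigUp := by
  funext x
  simp [pow_two, rot_apply, refl_apply, rSigUp, pt]

lemma rot_pow_four : rot ^ 4 = 1 := by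
  ext x i
  fin_cases i <;> simp [pow_succ, rot_apply, pt]

lemma refl_sq : refl ^ 2 = 1 := by
  ext x i
  fin_cases i <;> simp [pow_two, refl_apply, pt]

lemma refl_mul_rot_sq : (refl * rot) ^ 2 = 1 := by
  ext x i
  fin_cases i <;> simp [pow_two, rot_apply, refl_apply, pt]

lemma orderOf_rot : orderOf rot = 4 := by
  have : Fact (Nat.Prime 2) := ⟨Nat.prime_two⟩
  refine orderOf_eq_prime_pow (p := 2) (n := 1) (fun h => ?_) rot_pow_four
  have := congrArg (fun g : E4 ≃ₗᵢ[ℝ] E4 => g (pt 0 1 0 0) 1) h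
  simp [coe_rot_sq, rC, pt] at this
  norm_num at this

variable {m : ℕ}

lemma rot_apply_vert (i : Fin 4) : rot (vert m m i) = vert m m (![3, 2, 0, 1] i) := by
  fin_cases i <;> ext l <;> fin_cases l <;> simp [rot_apply, vert_eq, pt]

lemma refl_apply_vert (i : Fin 4) : refl (vert m m i) = vert m m (![1, 0, 2, 3] i) := by
  fin_cases i <;> ext l <;> fin_cases l <;> simp [refl_apply, vert_eq, pt]

lemma rot_mem_stabilizer (hm : 1 < m) : rot ∈ LinearIsometryEquiv.stabilizer ℝ (Tet m m) := by
  rw [tet_eq hm hm]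
  exact Module.Basis.mem_stabilizer_of_perm ⟨![3, 2, 0, 1], ![2, 3, 1, 0], by decide, by decide⟩
    (by simpa using rot_apply_vert)

lemma refl_mem_stabilizer (hm : 1 < m) : refl ∈ LinearIsometryEquiv.stabilizer ℝ (Tet m m) := by
  rw [tet_eq hm hm]
  exact Module.Basis.mem_stabilizer_of_perm ⟨![1, 0, 2, 3], ![1, 0, 2, 3], by decide, by decide⟩
    (by simpa using refl_apply_vert)

end Generators

lemma card_reflections :
    Nat.card {f : E4 → E4 | f = id ∨ f = rSigLow ∨ f = rSigUp ∨ f = rC} = 4 := by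
  rw [Nat.card_coe_set_eq]
  change Set.ncard ({id, rSigLow, rSigUp, rC} : Set (E4 → E4)) = 4
  rw [Set.ncard_insert_of_notMem, Set.ncard_insert_of_notMem, Set.ncard_pair]
  all_goals try simp only [Set.mem_insert_iff, Set.mem_singleton_iff, not_or]
  all_goals and_intros
  all_goals
    refine ne_of_apply_ne (fun f : E4 → E4 => (f (pt 0 1 0 1) 1, f (pt 0 1 0 1) 3)) ?_
    simp [rSigLow, rSigUp, rC, pt]
    norm_num

end SphericalTetrahedron

open SphericalTetrahedron

/-- For `m = k > 2` the stabilizer of `Ω₀⁰` in `O(4)` is isomorphic to the dihedral group of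
order 8 (via a multiplication-preserving bijection), and it contains the group
`{id, R_{Σ₀}, R_{Σ⁰}, R_{C₀⁰}}` as a subgroup, which then has index 2. -/
theorem statement11 (m : ℕ) (hm : 2 < m) :
    (∃ e : DihedralGroup 4 ≃ {g : E4 ≃ₗᵢ[ℝ] E4 // g '' Tet m m = Tet m m},
      ∀ a b : DihedralGroup 4, ⇑((e (a * b)).1) = ⇑((e a).1) ∘ ⇑((e b).1)) ∧
    (∀ g : E4 ≃ₗᵢ[ℝ] E4,
      (⇑g = id ∨ ⇑g = rSigLow ∨ ⇑g = rSigUp ∨ ⇑g = rC) → g '' Tet m m = Tet m m) ∧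
    Nat.card {g : E4 ≃ₗᵢ[ℝ] E4 // g '' Tet m m = Tet m m} =
      2 * Nat.card {f : E4 → E4 | f = id ∨ f = rSigLow ∨ f = rSigUp ∨ f = rC} := by
  have hrot := rot_mem_stabilizer (one_lt_two.trans hm)
  have hrefl := refl_mem_stabilizer (one_lt_two.trans hm)
  let e : DihedralGroup 4 → {g : E4 ≃ₗᵢ[ℝ] E4 // g '' Tet m m = Tet m m} := fun d =>
    ⟨DihedralGroup.lift rot refl rot_pow_four refl_sq refl_mul_rot_sq d,
      DihedralGroup.lift_mem _ _ _ hrot hrefl d⟩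
  obtain ⟨F, hF⟩ := exists_injective_preservesBlocks hm hm
  have : Finite {g : E4 ≃ₗᵢ[ℝ] E4 // g '' Tet m m = Tet m m} := Finite.of_injective F hF
  have he : Function.Bijective e := by
    refine Function.Injective.bijective_of_nat_card_le (fun a b hab =>
      DihedralGroup.lift_injective _ _ _ (by norm_num) orderOf_rot (congrArg Subtype.val hab)) ?_
    calc Nat.card {g : E4 ≃ₗᵢ[ℝ] E4 // g '' Tet m m = Tet m m}
        _ ≤ Nat.card {f // PreservesBlocks f} := Nat.card_le_card_of_injective F hF
        _ = Nat.card (DihedralGroup 4) := by rw [card_preservesBlocks, DihedralGroup.nat_card]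
  refine ⟨⟨Equiv.ofBijective e he, fun a b => by simp [e, map_mul]⟩, fun g hg => ?_, ?_⟩
  · refine LinearIsometryEquiv.mem_stabilizer.mp ?_
    have hg' : g = 1 ∨ g = refl ∨ g = refl * rot ^ 2 ∨ g = rot ^ 2 := by
      simpa only [← LinearIsometryEquiv.coe_one (R := ℝ) (E := E4), ← coe_refl,
        ← coe_refl_mul_rot_sq, ← coe_rot_sq, DFunLike.coe_fn_eq] using hg
    rcases hg' with rfl | rfl | rfl | rfl
    exacts [one_mem _, hrefl, mul_mem hrefl (pow_mem hrot 2), pow_mem hrot 2]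
  · rw [← Nat.card_congr (Equiv.ofBijective e he), DihedralGroup.nat_card, card_reflections]

end
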